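/- arXiv:2512.24106 — 4 statements merged into one kernel-verified Lean document; each statement's English description precedes it below -/
import Mathlib

section
/- Let m > 0, let η : ℝ → ℝ belong to the class A(m) with associated activation function φ, and let α ≥ 0. Then for every t ∈ ℝ, the series Σ_{k ∈ ℤ} φ(t − k) · |t − k|^α converges and satisfies Σ_{k ∈ ℤ} φ(t − k) · |t − k|^α ≤ (2m)^α · (⌊4m⌋ + 2). -/
def ClassA (m : ℝ) (η : ℝ → ℝ) : Prop :=
  Monotone η ∧ (∀ t : ℝ, m ≤ t → η t = 1) ∧ (∀ t : ℝ, t ≤ -m → η t = 0)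

noncomputable def act (m : ℝ) (η : ℝ → ℝ) (t : ℝ) : ℝ :=
  η (t + m) - η (t - m)

lemma act_nonneg' (m : ℝ) (hm : 0 < m) (η : ℝ → ℝ) (hη : ClassA m η) (s : ℝ) :
    0 ≤ act m η s := by
  have := hη.1 (show s - m ≤ s + m by linarith)
  simp only [act]; linarith

lemma act_le_one' (m : ℝ) (hm : 0 < m) (η : ℝ → ℝ) (hη : ClassA m η) (s : ℝ) :
    act m η s ≤ 1 := by
  have h1 : η (s + m) ≤ 1 := by
    rcases le_total m (s + m) with h | h
    · exact (hη.2.1 _ h).le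
    · rw [← hη.2.1 m le_rfl]; exact hη.1 h
  have h0 : 0 ≤ η (s - m) := by
    rcases le_total (s - m) (-m) with h | h
    · exact (hη.2.2 _ h).ge
    · rw [← hη.2.2 (-m) le_rfl]; exact hη.1 h
  simp only [act]; linarith

lemma act_eq_zero' (m : ℝ) (hm : 0 < m) (η : ℝ → ℝ) (hη : ClassA m η) (s : ℝ)
    (h : 2 * m ≤ |s|) : act m η s = 0 := by
  rcases le_abs.mp h with h' | h'
  · simp only [act]
    rw [hη.2.1 (s + m) (by linarith), hη.2.1 (s - m) (by linarith)]
    ring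
  · simp only [act]
    rw [hη.2.2 (s + m) (by linarith), hη.2.2 (s - m) (by linarith)]
    ring

theorem act_discrete_moment_bound (m : ℝ) (hm : 0 < m) (η : ℝ → ℝ) (hη : ClassA m η)
    (α : ℝ) (hα : 0 ≤ α) (t : ℝ) :
    Summable (fun k : ℤ => act m η (t - k) * |t - k| ^ α) ∧
      ∑' k : ℤ, act m η (t - k) * |t - k| ^ α ≤ (2 * m) ^ α * ((⌊(4 * m : ℝ)⌋ : ℝ) + 2) := by
  set f : ℤ → ℝ := fun k => act m η (t - k) * |t - k| ^ α with hf
  set a : ℤ := ⌈t - 2 * m⌉ with ha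
  set b : ℤ := ⌊t + 2 * m⌋ with hb
  set S : Finset ℤ := Finset.Icc a b with hS
  have hzero : ∀ k ∉ S, f k = 0 := by
    intro k hk
    rw [hS, Finset.mem_Icc, not_and_or, not_le, not_le] at hk
    have hact : act m η (t - k) = 0 := by
      apply act_eq_zero' m hm η hη
      rcases hk with hk | hk
      · have : (k : ℝ) < t - 2 * m := by exact_mod_cast Int.lt_ceil.mp hk
        rw [abs_of_nonneg (by linarith)]; linarith
      · have : t + 2 * m < (k : ℝ) := by exact_mod_cast Int.floor_lt.mp hk
        rw [abs_of_nonpos (by linarith)]; linarith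
    simp [hf, hact]
  have hsum : Summable f := summable_of_ne_finset_zero hzero
  refine ⟨hsum, ?_⟩
  rw [tsum_eq_sum hzero]
  have hbound : ∀ k ∈ S, f k ≤ (2 * m) ^ α := by
    intro k hk
    rw [hS, Finset.mem_Icc] at hk
    have h1 : t - 2 * m ≤ (k : ℝ) := le_trans (Int.le_ceil _) (by exact_mod_cast hk.1)
    have h2 : (k : ℝ) ≤ t + 2 * m := le_trans (by exact_mod_cast hk.2) (Int.floor_le _)
    have habs : |t - k| ≤ 2 * m := abs_le.mpr ⟨by linarith, by linarith⟩
    have hpow : |t - (k : ℝ)| ^ α ≤ (2 * m) ^ α :=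
      Real.rpow_le_rpow (abs_nonneg _) habs hα
    calc f k ≤ 1 * |t - (k : ℝ)| ^ α :=
          mul_le_mul_of_nonneg_right (act_le_one' m hm η hη _)
            (Real.rpow_nonneg (abs_nonneg _) _)
      _ = |t - (k : ℝ)| ^ α := one_mul _
      _ ≤ (2 * m) ^ α := hpow
  have hcard : (S.card : ℝ) ≤ (⌊(4 * m : ℝ)⌋ : ℝ) + 2 := by
    have hc : (S.card : ℤ) ≤ ⌊(4 * m : ℝ)⌋ + 2 := by
      rw [hS, Int.card_Icc]
      have hba : b + 1 - a ≤ ⌊(4 * m : ℝ)⌋ + 2 := by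
        have h1 : (b : ℝ) ≤ t + 2 * m := Int.floor_le _
        have h2 : t - 2 * m ≤ (a : ℝ) := Int.le_ceil _
        have : ((b - a : ℤ) : ℝ) ≤ 4 * m := by push_cast; linarith
        have hba' : b - a ≤ ⌊(4 * m : ℝ)⌋ := Int.le_floor.mpr this
        linarith
      have h0 : (0 : ℤ) ≤ ⌊(4 * m : ℝ)⌋ + 2 := by
        have : (0 : ℤ) ≤ ⌊(4 * m : ℝ)⌋ := Int.floor_nonneg.mpr (by linarith)
        linarith
      omega
    exact_mod_cast hc
  have hpos : (0 : ℝ) ≤ (2 * m) ^ α := Real.rpow_nonneg (by linarith) _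
  calc ∑ k ∈ S, f k ≤ S.card • (2 * m) ^ α := Finset.sum_le_card_nsmul S f _ hbound
    _ = (S.card : ℝ) * (2 * m) ^ α := by rw [nsmul_eq_mul]
    _ ≤ ((⌊(4 * m : ℝ)⌋ : ℝ) + 2) * (2 * m) ^ α := by
        exact mul_le_mul_of_nonneg_right hcard hpos
    _ = (2 * m) ^ α * ((⌊(4 * m : ℝ)⌋ : ℝ) + 2) := mul_comm _ _
end

section
/- Let m > 0, let η : ℝ → ℝ belong to the class A(m) with associated activation function φ. Then the discrete absolute moment of order 0 is finite: for every t ∈ ℝ, Σ_{k ∈ ℤ} φ(t − k) ≤ ⌊4m⌋ + 2. -/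
theorem act_discrete_moment_zero_bound (m : ℝ) (hm : 0 < m) (η : ℝ → ℝ) (hη : ClassA m η)
    (t : ℝ) :
    Summable (fun k : ℤ => act m η (t - k)) ∧
      ∑' k : ℤ, act m η (t - k) ≤ (⌊(4 * m : ℝ)⌋ : ℝ) + 2 := by
  obtain ⟨hmono, h1, h0⟩ := hη
  have hle1 : ∀ s : ℝ, η s ≤ 1 := fun s => by
    rcases le_total s m with h | h
    · calc η s ≤ η m := hmono h
        _ = 1 := h1 m le_rfl
    · exact (h1 s h).le
  have hge0 : ∀ s : ℝ, 0 ≤ η s := fun s => by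
    rcases le_total s (-m) with h | h
    · exact (h0 s h).ge
    · calc (0:ℝ) = η (-m) := (h0 (-m) le_rfl).symm
        _ ≤ η s := hmono h
  set a : ℤ := ⌈t - 2*m⌉ with ha
  set b : ℤ := ⌊t + 2*m⌋ with hb
  have hzero : ∀ k : ℤ, k ∉ Finset.Icc a b → act m η (t - k) = 0 := by
    intro k hk
    simp only [Finset.mem_Icc, not_and_or, not_le] at hk
    unfold act
    rcases hk with hk | hk
    · have hk' : (k:ℝ) < t - 2*m := Int.lt_ceil.mp hk
      rw [h1 _ (by linarith), h1 _ (by linarith)]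
      ring
    · have hk' : t + 2*m < (k:ℝ) := Int.floor_lt.mp hk
      rw [h0 _ (by linarith), h0 _ (by linarith)]
      ring
  have hsum : Summable (fun k : ℤ => act m η (t - k)) :=
    summable_of_ne_finset_zero hzero
  refine ⟨hsum, ?_⟩
  rw [tsum_eq_sum hzero]
  have hcard : ∑ k ∈ Finset.Icc a b, act m η (t - k) ≤ ((Finset.Icc a b).card : ℝ) := by
    calc ∑ k ∈ Finset.Icc a b, act m η (t - k) ≤ ∑ _k ∈ Finset.Icc a b, (1:ℝ) := by
          refine Finset.sum_le_sum fun k _ => ?_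
          unfold act
          have := hle1 (t - k + m)
          have := hge0 (t - k - m)
          linarith
      _ = ((Finset.Icc a b).card : ℝ) := by simp
  refine hcard.trans ?_
  have hfl : (0:ℤ) ≤ ⌊(4*m : ℝ)⌋ := Int.floor_nonneg.mpr (by linarith)
  rcases le_or_gt a b with hab | hab
  · rw [Int.card_Icc]
    have h1' : (a:ℝ) ≥ t - 2*m := Int.le_ceil _
    have h2' : (b:ℝ) ≤ t + 2*m := Int.floor_le _
    have hba : ((b - a : ℤ) : ℝ) ≤ 4*m := by push_cast; linarith
    have hba' : b - a ≤ ⌊(4*m : ℝ)⌋ := Int.le_floor.mpr hba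
    have htn : ((b + 1 - a).toNat : ℤ) = b + 1 - a := Int.toNat_of_nonneg (by omega)
    have : (((b + 1 - a).toNat : ℤ) : ℝ) ≤ (⌊(4*m : ℝ)⌋ : ℝ) + 2 := by
      rw [htn]; push_cast
      have : ((b - a : ℤ) : ℝ) ≤ (⌊(4*m : ℝ)⌋ : ℝ) := by exact_mod_cast hba'
      push_cast at this; linarith
    exact_mod_cast this
  · rw [Finset.Icc_eq_empty (by omega)]
    simp only [Finset.card_empty, Nat.cast_zero]
    have : (0:ℝ) ≤ (⌊(4*m : ℝ)⌋ : ℝ) := by exact_mod_cast hfl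
    linarith
end

section
/- Let (Ω, ℱ, ℙ) be a probability space, T > 0, and X : [0,T] → Ω → ℝ a stochastic process such that X_s is measurable and E[|X_s|²] < ∞ for every s ∈ [0,T], with K := sup_{s ∈ [0,T]} E[|X_s|²] < ∞. Let m > 0 and η ∈ A(m) with activation function φ. Then for every n ≥ 1 and every t ∈ [0,T], the operator value S_n(X,t) is square-integrable and E[|S_n(X,t)|²] ≤ (⌊4m⌋ + 2)² · K. -/
open MeasureTheory Filter

/-- The stochastic interpolation neural network operator (SINNO) with nodes
`t_k = k * (T / n)`, `k = 0, …, n`, and step `δ = T / n`. -/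
noncomputable def SINNO {Ω : Type*} (m : ℝ) (η : ℝ → ℝ) (T : ℝ) (n : ℕ)
    (X : ℝ → Ω → ℝ) (t : ℝ) (ω : Ω) : ℝ :=
  ∑ k ∈ Finset.range (n + 1),
    X (k * (T / n)) ω * act m η ((2 * m / (T / n)) * (t - k * (T / n)))

theorem sinno_meanSquare_bounded {Ω : Type*} [MeasurableSpace Ω] (P : Measure Ω)
    [IsProbabilityMeasure P] (T : ℝ) (hT : 0 < T) (X : ℝ → Ω → ℝ)
    (hmeas : ∀ s ∈ Set.Icc (0 : ℝ) T, Measurable (X s))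
    (hL2 : ∀ s ∈ Set.Icc (0 : ℝ) T, Integrable (fun ω => (X s ω) ^ 2) P)
    (hbdd : BddAbove {e : ℝ | ∃ s ∈ Set.Icc (0 : ℝ) T, e = ∫ ω, (X s ω) ^ 2 ∂P})
    (m : ℝ) (hm : 0 < m) (η : ℝ → ℝ) (hη : ClassA m η)
    (n : ℕ) (hn : 1 ≤ n) (t : ℝ) (ht : t ∈ Set.Icc (0 : ℝ) T) :
    Integrable (fun ω => (SINNO m η T n X t ω) ^ 2) P ∧
      ∫ ω, (SINNO m η T n X t ω) ^ 2 ∂P ≤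
        ((⌊(4 * m : ℝ)⌋ : ℝ) + 2) ^ 2 *
          sSup {e : ℝ | ∃ s ∈ Set.Icc (0 : ℝ) T, e = ∫ ω, (X s ω) ^ 2 ∂P} := by
  classical
  obtain ⟨hmono, hone, hzero⟩ := hη
  obtain ⟨ht0, htT⟩ := ht
  have hnR : (0 : ℝ) < n := by exact_mod_cast Nat.lt_of_lt_of_le Nat.zero_lt_one hn
  set δ : ℝ := T / n with hδdef
  have hδ : 0 < δ := div_pos hT hnR
  -- bounds on η
  have hη0 : ∀ x, 0 ≤ η x := by
    intro x
    rcases le_total x (-m) with h | h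
    · rw [hzero x h]
    · rw [← hzero (-m) le_rfl]; exact hmono h
  have hη1 : ∀ x, η x ≤ 1 := by
    intro x
    rcases le_total m x with h | h
    · rw [hone x h]
    · rw [← hone m le_rfl]; exact hmono h
  -- bounds on activation
  have hact0 : ∀ x, 0 ≤ act m η x := fun x =>
    sub_nonneg.2 (hmono (by linarith))
  have hact1 : ∀ x, act m η x ≤ 1 := fun x => by
    have := hη1 (x + m); have := hη0 (x - m); unfold act; linarith
  have hactz : ∀ x : ℝ, 2 * m ≤ |x| → act m η x = 0 := by
    intro x hx
    rcases le_or_gt (2 * m) x with h | h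
    · unfold act
      rw [hone (x + m) (by linarith), hone (x - m) (by linarith), sub_self]
    · have hx' : x ≤ -(2 * m) := by
        rcases abs_cases x with ⟨h1, _⟩ | ⟨h1, _⟩ <;> linarith
      unfold act
      rw [hzero (x + m) (by linarith), hzero (x - m) (by linarith), sub_self]
  -- the coefficient function
  set φ : ℕ → ℝ := fun k => act m η ((2 * m / δ) * (t - k * δ)) with hφdef
  have hφ0 : ∀ k, 0 ≤ φ k := fun k => hact0 _
  have hφ1 : ∀ k, φ k ≤ 1 := fun k => hact1 _
  -- support of φ
  set j : ℕ := ⌊t / δ⌋₊ with hjdef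
  have hsupp : ∀ k : ℕ, φ k ≠ 0 → k = j ∨ k = j + 1 := by
    intro k hk
    have habs : |t - k * δ| < δ := by
      by_contra h
      push_neg at h
      apply hk
      apply hactz
      rw [abs_mul, abs_of_pos (div_pos (by linarith) hδ)]
      calc 2 * m = (2 * m / δ) * δ := by field_simp
        _ ≤ (2 * m / δ) * |t - k * δ| := by
            apply mul_le_mul_of_nonneg_left h (le_of_lt (div_pos (by linarith) hδ))
    rw [abs_lt] at habs
    have hdiv : t / δ + 1 = (t + δ) / δ := by
      rw [add_div, div_self hδ.ne']
    have hdiv2 : t / δ - 1 = (t - δ) / δ := by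
      rw [sub_div, div_self hδ.ne']
    have h1 : (k : ℝ) < t / δ + 1 := by
      rw [hdiv]
      rw [lt_div_iff₀ hδ]
      linarith [habs.1]
    have h2 : t / δ - 1 < k := by
      rw [hdiv2]
      rw [div_lt_iff₀ hδ]
      linarith [habs.2]
    have hj1 : (j : ℝ) ≤ t / δ := Nat.floor_le (by positivity)
    have hj2 : t / δ < j + 1 := Nat.lt_floor_add_one _
    have hk1 : k < j + 2 := by exact_mod_cast (by push_cast; linarith : (k : ℝ) < (j : ℝ) + 2)
    have hk2 : j ≤ k := by
      by_contra h
      push_neg at h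
      have h' : (k : ℝ) + 1 ≤ j := by exact_mod_cast h
      linarith
    omega
  -- the effective index set
  set C : Finset ℕ := (Finset.range (n + 1)) ∩ ({j, j + 1} : Finset ℕ) with hCdef
  have hCsub : C ⊆ Finset.range (n + 1) := Finset.inter_subset_left
  have hCcard : (C.card : ℝ) ≤ 2 := by
    have h1 : C.card ≤ ({j, j + 1} : Finset ℕ).card :=
      Finset.card_le_card Finset.inter_subset_right
    have h2 : ({j, j + 1} : Finset ℕ).card ≤ 2 :=
      (Finset.card_insert_le _ _).trans (by simp)
    exact_mod_cast h1.trans h2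
  -- rewrite SINNO as a sum over C
  have hS : ∀ ω, SINNO m η T n X t ω = ∑ k ∈ C, X (k * δ) ω * φ k := by
    intro ω
    unfold SINNO
    rw [← hδdef]
    refine (Finset.sum_subset hCsub ?_).symm
    intro k hk hkC
    have : φ k = 0 := by
      by_contra h
      rcases hsupp k h with rfl | rfl <;>
        exact hkC (Finset.mem_inter.2 ⟨hk, by simp⟩)
    rw [hφdef] at this
    simp only at this
    rw [this, mul_zero]
  -- nodes are in [0, T]
  have hnode : ∀ k ∈ C, (k : ℝ) * δ ∈ Set.Icc (0 : ℝ) T := by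
    intro k hk
    have hkn : k ≤ n := Nat.lt_succ_iff.mp (Finset.mem_range.mp (hCsub hk))
    constructor
    · positivity
    · rw [hδdef]
      rw [mul_div_assoc', div_le_iff₀ hnR]
      have : (k : ℝ) ≤ n := by exact_mod_cast hkn
      nlinarith
  -- pointwise bound
  have hpt : ∀ ω, (SINNO m η T n X t ω) ^ 2 ≤ 2 * ∑ k ∈ C, (X (k * δ) ω) ^ 2 := by
    intro ω
    rw [hS ω]
    calc (∑ k ∈ C, X (k * δ) ω * φ k) ^ 2
        ≤ C.card * ∑ k ∈ C, (X (k * δ) ω * φ k) ^ 2 := sq_sum_le_card_mul_sum_sq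
      _ ≤ 2 * ∑ k ∈ C, (X (k * δ) ω) ^ 2 := by
          apply mul_le_mul hCcard ?_ ?_ (by norm_num)
          · apply Finset.sum_le_sum
            intro k hk
            rw [mul_pow]
            have h1 : φ k ^ 2 ≤ 1 := by
              rw [sq]
              exact mul_le_one₀ (hφ1 k) (hφ0 k) (hφ1 k)
            nlinarith [sq_nonneg (X (k * δ) ω), hφ0 k]
          · exact Finset.sum_nonneg fun k _ => sq_nonneg _
  -- integrability of the dominating function
  have hgint : Integrable (fun ω => 2 * ∑ k ∈ C, (X (k * δ) ω) ^ 2) P := by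
    apply Integrable.const_mul
    exact integrable_finset_sum C fun k hk => hL2 _ (hnode k hk)
  -- measurability of SINNO
  have hSmeas : Measurable (fun ω => SINNO m η T n X t ω) := by
    have : (fun ω => SINNO m η T n X t ω) = fun ω => ∑ k ∈ C, X (k * δ) ω * φ k := by
      funext ω; exact hS ω
    rw [this]
    exact Finset.measurable_sum C fun k hk => ((hmeas _ (hnode k hk)).mul measurable_const)
  have hint : Integrable (fun ω => (SINNO m η T n X t ω) ^ 2) P := by
    apply Integrable.mono' hgint ((hSmeas.pow_const 2).aestronglyMeasurable)
    filter_upwards with ω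
    rw [Real.norm_eq_abs, abs_of_nonneg (sq_nonneg _)]
    exact hpt ω
  refine ⟨hint, ?_⟩
  set K : ℝ := sSup {e : ℝ | ∃ s ∈ Set.Icc (0 : ℝ) T, e = ∫ ω, (X s ω) ^ 2 ∂P} with hKdef
  have hKmem : ∀ s ∈ Set.Icc (0 : ℝ) T, (∫ ω, (X s ω) ^ 2 ∂P) ≤ K := by
    intro s hs
    exact le_csSup hbdd ⟨s, hs, rfl⟩
  have hK0 : 0 ≤ K := by
    refine le_trans ?_ (hKmem 0 ⟨le_rfl, le_of_lt hT⟩)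
    exact integral_nonneg fun ω => sq_nonneg _
  have hfloor : (0 : ℝ) ≤ (⌊(4 * m : ℝ)⌋ : ℝ) := by
    have : (0 : ℤ) ≤ ⌊(4 * m : ℝ)⌋ := Int.floor_nonneg.2 (by linarith)
    exact_mod_cast this
  calc ∫ ω, (SINNO m η T n X t ω) ^ 2 ∂P
      ≤ ∫ ω, 2 * ∑ k ∈ C, (X (k * δ) ω) ^ 2 ∂P := by
        apply integral_mono hint hgint
        intro ω; exact hpt ω
    _ = 2 * ∑ k ∈ C, ∫ ω, (X (k * δ) ω) ^ 2 ∂P := by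
        rw [integral_const_mul]
        congr 1
        exact integral_finset_sum C fun k hk => hL2 _ (hnode k hk)
    _ ≤ 2 * ∑ k ∈ C, K := by
        apply mul_le_mul_of_nonneg_left ?_ (by norm_num)
        exact Finset.sum_le_sum fun k hk => hKmem _ (hnode k hk)
    _ = 2 * (C.card * K) := by rw [Finset.sum_const, nsmul_eq_mul]
    _ ≤ 2 * (2 * K) := by nlinarith
    _ ≤ ((⌊(4 * m : ℝ)⌋ : ℝ) + 2) ^ 2 * K := by
        have h4 : (4 : ℝ) ≤ ((⌊(4 * m : ℝ)⌋ : ℝ) + 2) ^ 2 := by nlinarith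
        calc 2 * (2 * K) = 4 * K := by ring
          _ ≤ ((⌊(4 * m : ℝ)⌋ : ℝ) + 2) ^ 2 * K := mul_le_mul_of_nonneg_right h4 hK0
end

section
/- Let (Ω, ℱ, ℙ) be a probability space, T > 0, and X : [0,T] → Ω → ℝ a process with X_t measurable, E[|X_t|²] < ∞ for all t ∈ [0,T], and sup_{t ∈ [0,T]} E[|X_t|²] < ∞. Let m > 0 and η ∈ A(m) with activation function φ. Then for every n ≥ 1 and every t ∈ [0,T], the SINNO approximation error satisfies E[|S_n(X,t) − X_t|²] ≤ W(X, T/n). -/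
open MeasureTheory Filter

/-- The mean-square modulus of continuity of a stochastic process `X` on `[0, T]`. -/
noncomputable def msModulus {Ω : Type*} [MeasurableSpace Ω] (P : Measure Ω) (T : ℝ)
    (X : ℝ → Ω → ℝ) (h : ℝ) : ℝ :=
  sSup {e : ℝ | ∃ t ∈ Set.Icc (0 : ℝ) T, ∃ s ∈ Set.Icc (0 : ℝ) T,
    |t - s| ≤ h ∧ e = ∫ ω, (X t ω - X s ω) ^ 2 ∂P}

theorem sinno_error_le_modulus {Ω : Type*} [MeasurableSpace Ω] (P : Measure Ω)
    [IsProbabilityMeasure P] (T : ℝ) (hT : 0 < T) (X : ℝ → Ω → ℝ)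
    (hmeas : ∀ s ∈ Set.Icc (0 : ℝ) T, Measurable (X s))
    (hL2 : ∀ s ∈ Set.Icc (0 : ℝ) T, Integrable (fun ω => (X s ω) ^ 2) P)
    (hbdd : BddAbove {e : ℝ | ∃ s ∈ Set.Icc (0 : ℝ) T, e = ∫ ω, (X s ω) ^ 2 ∂P})
    (m : ℝ) (hm : 0 < m) (η : ℝ → ℝ) (hη : ClassA m η)
    (n : ℕ) (hn : 1 ≤ n) (t : ℝ) (ht : t ∈ Set.Icc (0 : ℝ) T) :
    ∫ ω, (SINNO m η T n X t ω - X t ω) ^ 2 ∂P ≤ msModulus P T X (T / n) := by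
  obtain ⟨hmono, hone, hzero⟩ := hη
  have hn0 : (0 : ℝ) < (n : ℝ) := by exact_mod_cast hn
  set δ : ℝ := T / n with hδdef
  have hδ : 0 < δ := div_pos hT hn0
  have hc0 : 0 < 2 * m / δ := div_pos (by linarith) hδ
  -- η takes values in [0,1]
  have hη0 : ∀ s : ℝ, 0 ≤ η s := by
    intro s
    rcases le_total s (-m) with h | h
    · rw [hzero s h]
    · calc (0:ℝ) = η (-m) := (hzero (-m) le_rfl).symm
        _ ≤ η s := hmono h
  have hη1 : ∀ s : ℝ, η s ≤ 1 := by
    intro s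
    rcases le_total m s with h | h
    · rw [hone s h]
    · calc η s ≤ η m := hmono h
        _ = 1 := hone m le_rfl
  -- the weights
  set φ : ℕ → ℝ := fun j => act m η ((2 * m / δ) * (t - j * δ)) with hφdef
  have hφ0 : ∀ j, 0 ≤ φ j := fun j => sub_nonneg.2 (hmono (by linarith))
  have hφ1 : ∀ j, φ j ≤ 1 := fun j => by
    have h1 := hη1 ((2 * m / δ) * (t - j * δ) + m)
    have h2 := hη0 ((2 * m / δ) * (t - j * δ) - m)
    simp only [hφdef, act]; linarith
  -- vanishing weights away from the node
  have hφvanish : ∀ j : ℕ, δ ≤ |t - j * δ| → φ j = 0 := by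
    intro j hj
    have key : (2 * m / δ) * δ = 2 * m := div_mul_cancel₀ _ hδ.ne'
    rcases le_abs.mp hj with h | h
    · -- x ≥ 2m
      have hx : 2 * m ≤ (2 * m / δ) * (t - j * δ) := by
        calc 2 * m = (2 * m / δ) * δ := key.symm
          _ ≤ (2 * m / δ) * (t - j * δ) := by
            exact mul_le_mul_of_nonneg_left h hc0.le
      simp only [hφdef, act]
      rw [hone _ (by linarith), hone _ (by linarith), sub_self]
    · -- x ≤ -2m
      have hx : (2 * m / δ) * (t - j * δ) ≤ -(2 * m) := by
        have : t - j * δ ≤ -δ := by linarith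
        calc (2 * m / δ) * (t - j * δ) ≤ (2 * m / δ) * (-δ) :=
              mul_le_mul_of_nonneg_left this hc0.le
          _ = -(2 * m) := by rw [mul_neg, key]
      simp only [hφdef, act]
      rw [hzero _ (by linarith), hzero _ (by linarith), sub_self]
  -- partition of unity
  have hsum1 : ∑ j ∈ Finset.range (n + 1), φ j = 1 := by
    have hstep : ∀ j : ℕ,
        φ j = η ((2 * m / δ) * (t - j * δ) + m) - η ((2 * m / δ) * (t - (j + 1 : ℕ) * δ) + m) := by
      intro j
      have harg : (2 * m / δ) * (t - j * δ) - m = (2 * m / δ) * (t - (j + 1 : ℕ) * δ) + m := by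
        push_cast
        have key : (2 * m / δ) * δ = 2 * m := div_mul_cancel₀ _ hδ.ne'
        ring_nf
        ring_nf at key
        nlinarith [key]
      simp only [hφdef, act, harg]
    calc ∑ j ∈ Finset.range (n + 1), φ j
        = ∑ j ∈ Finset.range (n + 1),
            (η ((2 * m / δ) * (t - j * δ) + m) - η ((2 * m / δ) * (t - (j + 1 : ℕ) * δ) + m)) :=
          Finset.sum_congr rfl fun j _ => hstep j
      _ = η ((2 * m / δ) * (t - (0 : ℕ) * δ) + m)
            - η ((2 * m / δ) * (t - (n + 1 : ℕ) * δ) + m) := by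
          rw [Finset.sum_range_sub' (fun j : ℕ => η ((2 * m / δ) * (t - j * δ) + m)) (n + 1)]
      _ = 1 := by
          have h1 : η ((2 * m / δ) * (t - (0 : ℕ) * δ) + m) = 1 := by
            apply hone
            have : 0 ≤ (2 * m / δ) * t := mul_nonneg hc0.le ht.1
            push_cast
            nlinarith
          have h2 : η ((2 * m / δ) * (t - (n + 1 : ℕ) * δ) + m) = 0 := by
            apply hzero
            have hTn : (n : ℝ) * δ = T := by
              rw [hδdef]; field_simp
            have harg : t - ((n : ℝ) + 1) * δ ≤ -δ := by
              have := ht.2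
              nlinarith
            have := mul_le_mul_of_nonneg_left harg hc0.le
            have key : (2 * m / δ) * δ = 2 * m := div_mul_cancel₀ _ hδ.ne'
            push_cast
            nlinarith
          rw [h1, h2, sub_zero]
  -- nodes are in [0, T]
  have hnode : ∀ j ∈ Finset.range (n + 1), (j : ℝ) * δ ∈ Set.Icc (0 : ℝ) T := by
    intro j hj
    have hjn : (j : ℝ) ≤ n := by
      exact_mod_cast Nat.lt_succ_iff.mp (Finset.mem_range.mp hj)
    have hTn : (n : ℝ) * δ = T := by rw [hδdef]; field_simp
    constructor
    · positivity
    · calc (j : ℝ) * δ ≤ (n : ℝ) * δ := by nlinarith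
        _ = T := hTn
  -- integrability of squared increments
  have hint : ∀ s ∈ Set.Icc (0 : ℝ) T,
      Integrable (fun ω => (X s ω - X t ω) ^ 2) P := by
    intro s hs
    apply Integrable.mono' (g := fun ω => 2 * (X s ω) ^ 2 + 2 * (X t ω) ^ 2)
    · exact ((hL2 s hs).const_mul 2).add ((hL2 t ht).const_mul 2)
    · exact (((hmeas s hs).sub (hmeas t ht)).pow_const 2).aestronglyMeasurable
    · filter_upwards with ω
      rw [Real.norm_eq_abs, abs_of_nonneg (sq_nonneg _)]
      nlinarith [sq_nonneg (X s ω + X t ω)]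
  -- BddAbove of the modulus set
  have hBddMod : BddAbove {e : ℝ | ∃ a ∈ Set.Icc (0 : ℝ) T, ∃ b ∈ Set.Icc (0 : ℝ) T,
      |a - b| ≤ δ ∧ e = ∫ ω, (X a ω - X b ω) ^ 2 ∂P} := by
    obtain ⟨B, hB⟩ := hbdd
    refine ⟨4 * B, ?_⟩
    rintro e ⟨a, ha, b, hb, -, rfl⟩
    have hBa : ∫ ω, (X a ω) ^ 2 ∂P ≤ B := hB ⟨a, ha, rfl⟩
    have hBb : ∫ ω, (X b ω) ^ 2 ∂P ≤ B := hB ⟨b, hb, rfl⟩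
    have hle : ∀ ω, (X a ω - X b ω) ^ 2 ≤ 2 * (X a ω) ^ 2 + 2 * (X b ω) ^ 2 := by
      intro ω; nlinarith [sq_nonneg (X a ω + X b ω)]
    calc ∫ ω, (X a ω - X b ω) ^ 2 ∂P
        ≤ ∫ ω, (2 * (X a ω) ^ 2 + 2 * (X b ω) ^ 2) ∂P := by
          apply integral_mono_of_nonneg
          · filter_upwards with ω using sq_nonneg _
          · exact ((hL2 a ha).const_mul 2).add ((hL2 b hb).const_mul 2)
          · filter_upwards with ω using hle ω
      _ = 2 * ∫ ω, (X a ω) ^ 2 ∂P + 2 * ∫ ω, (X b ω) ^ 2 ∂P := by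
          rw [integral_add ((hL2 a ha).const_mul 2) ((hL2 b hb).const_mul 2),
            integral_const_mul, integral_const_mul]
      _ ≤ 4 * B := by linarith
  -- each admissible increment is ≤ modulus
  have hterm : ∀ j ∈ Finset.range (n + 1),
      φ j * (∫ ω, (X (j * δ) ω - X t ω) ^ 2 ∂P) ≤ φ j * msModulus P T X δ := by
    intro j hj
    rcases eq_or_lt_of_le (hφ0 j) with h0 | h0
    · rw [← h0]; simp
    · apply mul_le_mul_of_nonneg_left _ (hφ0 j)
      apply le_csSup hBddMod
      refine ⟨(j : ℝ) * δ, hnode j hj, t, ht, ?_, rfl⟩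
      by_contra hcon
      push_neg at hcon
      have : φ j = 0 := by
        apply hφvanish
        rw [abs_sub_comm] at hcon
        exact hcon.le
      linarith [this ▸ h0]
  -- pointwise: (S - X_t)^2 ≤ Σ (X_{t_j} - X_t)^2 φ_j
  have hptwise : ∀ ω, (SINNO m η T n X t ω - X t ω) ^ 2 ≤
      ∑ j ∈ Finset.range (n + 1), (X (j * δ) ω - X t ω) ^ 2 * φ j := by
    intro ω
    have hrep : SINNO m η T n X t ω - X t ω =
        ∑ j ∈ Finset.range (n + 1), (X (j * δ) ω - X t ω) * φ j := by
      simp only [SINNO, ← hδdef, ← hφdef, sub_mul, Finset.sum_sub_distrib, ← Finset.mul_sum,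
        hsum1, mul_one]
      rfl
    rw [hrep]
    have := Finset.sum_sq_le_sum_mul_sum_of_sq_eq_mul (Finset.range (n + 1))
      (r := fun j => (X (j * δ) ω - X t ω) * φ j)
      (f := fun j => φ j)
      (g := fun j => (X (j * δ) ω - X t ω) ^ 2 * φ j)
      (fun j _ => hφ0 j)
      (fun j _ => mul_nonneg (sq_nonneg _) (hφ0 j))
      (fun j _ => by ring)
    calc (∑ j ∈ Finset.range (n + 1), (X (j * δ) ω - X t ω) * φ j) ^ 2
        ≤ (∑ j ∈ Finset.range (n + 1), φ j) *
            ∑ j ∈ Finset.range (n + 1), (X (j * δ) ω - X t ω) ^ 2 * φ j := this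
      _ = ∑ j ∈ Finset.range (n + 1), (X (j * δ) ω - X t ω) ^ 2 * φ j := by
          rw [hsum1, one_mul]
  -- integrability of the majorant
  have hmajint : Integrable
      (fun ω => ∑ j ∈ Finset.range (n + 1), (X (j * δ) ω - X t ω) ^ 2 * φ j) P := by
    apply integrable_finset_sum
    intro j hj
    exact (hint _ (hnode j hj)).mul_const _
  calc ∫ ω, (SINNO m η T n X t ω - X t ω) ^ 2 ∂P
      ≤ ∫ ω, ∑ j ∈ Finset.range (n + 1), (X (j * δ) ω - X t ω) ^ 2 * φ j ∂P := by
        apply integral_mono_of_nonneg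
        · filter_upwards with ω using sq_nonneg _
        · exact hmajint
        · filter_upwards with ω using hptwise ω
    _ = ∑ j ∈ Finset.range (n + 1), φ j * ∫ ω, (X (j * δ) ω - X t ω) ^ 2 ∂P := by
        rw [integral_finset_sum _ (fun j hj => (hint _ (hnode j hj)).mul_const _)]
        exact Finset.sum_congr rfl fun j hj => by
          rw [integral_mul_const, mul_comm]
    _ ≤ ∑ j ∈ Finset.range (n + 1), φ j * msModulus P T X δ :=
        Finset.sum_le_sum hterm
    _ = msModulus P T X δ := by rw [← Finset.sum_mul, hsum1, one_mul]
    _ = msModulus P T X (T / n) := by rw [hδdef]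
end
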